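/- Let α, β, γ be nonnegative integers with α + β + γ = 5. Then there exist rational numbers a₁,a₂,a₃,b₁,b₂,b₃,c₁,c₂,c₃ satisfying the fifteen equations (cycle equations) −2a₁+a₂+c₃ = 0, a₁−2a₂+a₃ = −1, a₂−2a₃+b₁ = γ−α, a₃−2b₁+b₂ = 0, b₁−2b₂+b₃ = 1, b₂−2b₃+c₁ = α−β, b₃−2c₁+c₂ = 0, c₁−2c₂+c₃ = 0, c₂−2c₃+a₁ = β−γ; (section equations) a₂+α·a₃+β·b₃+γ·c₃ = 3, b₂+γ·a₃+α·b₃+β·c₃ = −3, c₂+β·a₃+γ·b₃+α·c₃ = 0; and (sum equations) a₁+b₁+c₁ = 0, a₂+b₂+c₂ = 0, a₃+b₃+c₃ = 0, if and only if (α,β,γ) = (2,1,2) or (α,β,γ) = (1,3,1). -/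
import Mathlib


/-- The linear system for expressing `E₂ - E₁` in terms of the components of the
`I₉` fibre has a rational solution if and only if `(α,β,γ) = (2,1,2)` or
`(α,β,γ) = (1,3,1)`. -/
theorem fake_plane_stmt2 (α β γ : ℕ) (hsum : α + β + γ = 5) :
    (∃ a₁ a₂ a₃ b₁ b₂ b₃ c₁ c₂ c₃ : ℚ,
      -- cycle equations
      -2 * a₁ + a₂ + c₃ = 0 ∧
      a₁ - 2 * a₂ + a₃ = -1 ∧
      a₂ - 2 * a₃ + b₁ = (γ : ℚ) - (α : ℚ) ∧
      a₃ - 2 * b₁ + b₂ = 0 ∧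
      b₁ - 2 * b₂ + b₃ = 1 ∧
      b₂ - 2 * b₃ + c₁ = (α : ℚ) - (β : ℚ) ∧
      b₃ - 2 * c₁ + c₂ = 0 ∧
      c₁ - 2 * c₂ + c₃ = 0 ∧
      c₂ - 2 * c₃ + a₁ = (β : ℚ) - (γ : ℚ) ∧
      -- section equations
      a₂ + (α : ℚ) * a₃ + (β : ℚ) * b₃ + (γ : ℚ) * c₃ = 3 ∧
      b₂ + (γ : ℚ) * a₃ + (α : ℚ) * b₃ + (β : ℚ) * c₃ = -3 ∧
      c₂ + (β : ℚ) * a₃ + (γ : ℚ) * b₃ + (α : ℚ) * c₃ = 0 ∧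
      -- sum equations
      a₁ + b₁ + c₁ = 0 ∧
      a₂ + b₂ + c₂ = 0 ∧
      a₃ + b₃ + c₃ = 0) ↔
    ((α, β, γ) = (2, 1, 2) ∨ (α, β, γ) = (1, 3, 1)) := by
  constructor
  · rintro ⟨a₁, a₂, a₃, b₁, b₂, b₃, c₁, c₂, c₃, h1, h2, h3, h4, h5, h6, h7, h8, h9,
      h10, h11, h12, h13, h14, h15⟩
    have hα : α ≤ 5 := by omega
    have hβ : β ≤ 5 := by omega
    have hγ : γ ≤ 5 := by omega
    interval_cases α <;> interval_cases β <;> interval_cases γ <;>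
      first
        | omega
        | (left; rfl)
        | (right; rfl)
        | (exfalso; norm_num at h3 h6 h9 h10 h11 h12 ⊢; linarith)
  · rintro (h | h) <;> simp only [Prod.mk.injEq] at h <;>
      obtain ⟨rfl, rfl, rfl⟩ := h
    · exact ⟨4/3, 4/3, 1/3, -2/3, -5/3, -5/3, -2/3, 1/3, 4/3, by norm_num⟩
    · exact ⟨-2/3, 1/3, 1/3, 1/3, 1/3, 4/3, 1/3, -2/3, -5/3, by norm_num⟩
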